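/- Splitting estimate for the mass: for any u with the relevant norms finite, any R > 0, any p > 1 and N ≥ 1, ∫|u|² ≤ D_{p,N} R^{N(p-1)/(p+1)} ‖u‖_{L^{p+1}}² + R^{-2} ∫|x|²|u|², where D_{p,N} = (π^{N/2} Γ(2p/(p-1))/Γ(2p/(p-1) + N/2))^{(p-1)/(p+1)}. -/

import Mathlib

open MeasureTheory Real Set Metric Module

/-!
With `w_R(x) = (1 - |x|²/R²)₊` one has `1 ≤ w_R(x) + |x|²/R²` everywhere, hence
`∫|u|² ≤ ∫ w_R |u|² + R⁻² ∫|x|²|u|²`. Hölder with exponents `(p+1)/(p-1)` and `(p+1)/2` bounds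
`∫ w_R |u|²` by `‖w_R‖_{(p+1)/(p-1)} ‖u‖²_{p+1}`, and after scaling `x = R y` and passing to polar
coordinates, `∫ w_R^q = R^N π^{N/2} Γ(q+1) / Γ(q+1+N/2)` is a Beta integral.
-/

theorem intervalIntegral_rpow_mul_one_sub_rpow {a b : ℝ} (ha : 0 < a) (hb : 0 < b) :
    ∫ x in (0 : ℝ)..1, x ^ (a - 1) * (1 - x) ^ (b - 1) = Gamma a * Gamma b / Gamma (a + b) := by
  apply Complex.ofReal_injective
  have hβ := Complex.betaIntegral_eq_Gamma_mul_div a b (by simpa) (by simpa)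
  push_cast [← Complex.Gamma_ofReal, ← hβ, ← intervalIntegral.integral_ofReal]
  refine intervalIntegral.integral_congr fun x hx => ?_
  rw [uIcc_of_le zero_le_one] at hx
  push_cast [Complex.ofReal_cpow hx.1, Complex.ofReal_cpow (sub_nonneg.2 hx.2)]
  rfl

theorem integral_Ioi_rpow_mul_max_one_sub_rpow {a q : ℝ} (ha : 0 < a) (hq : 0 < q) :
    ∫ t in Ioi (0 : ℝ), t ^ (a - 1) * max (1 - t) 0 ^ q
      = Gamma a * Gamma (q + 1) / Gamma (a + (q + 1)) := by
  have hvanish : ∀ t ∈ Ioi (0 : ℝ) \ Ioc 0 1, t ^ (a - 1) * max (1 - t) 0 ^ q = 0 := by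
    intro t ⟨ht0, ht⟩
    simp only [mem_Ioc, not_and, not_le] at ht
    rw [max_eq_right (by linarith [ht ht0]), zero_rpow hq.ne', mul_zero]
  rw [setIntegral_eq_of_subset_of_forall_sdiff_eq_zero measurableSet_Ioi Ioc_subset_Ioi_self
    hvanish, ← intervalIntegral_rpow_mul_one_sub_rpow ha (by linarith),
    intervalIntegral.integral_of_le zero_le_one]
  refine setIntegral_congr_fun measurableSet_Ioc fun t ht => ?_
  rw [max_eq_left (sub_nonneg.2 ht.2), add_sub_cancel_right]

theorem integral_Ioi_pow_mul_max_one_sub_sq_rpow {n : ℕ} (hn : 0 < n) {q : ℝ} (hq : 0 < q) :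
    ∫ y in Ioi (0 : ℝ), y ^ (n - 1) * max (1 - y ^ 2) 0 ^ q
      = Gamma (n / 2) * Gamma (q + 1) / (2 * Gamma (n / 2 + (q + 1))) := by
  have hsubst := integral_comp_rpow_Ioi_of_pos (p := 2) two_pos
    (g := fun t => (1 / 2 : ℝ) * (t ^ ((n : ℝ) / 2 - 1) * max (1 - t) 0 ^ q))
  rw [integral_const_mul, integral_Ioi_rpow_mul_max_one_sub_rpow (by positivity) hq] at hsubst
  rw [div_mul_eq_div_div_swap, ← one_div_mul_eq_div, ← hsubst]
  refine setIntegral_congr_fun measurableSet_Ioi fun y (hy : 0 < y) => ?_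
  have hpow : (y ^ (2 : ℝ)) ^ ((n : ℝ) / 2 - 1) * y = y ^ (n - 1) := by
    rw [← rpow_mul hy.le, ← rpow_add_one hy.ne', ← rpow_natCast, Nat.cast_sub hn]
    ring_nf
  rw [smul_eq_mul, rpow_two, ← hpow]
  norm_num
  ring

theorem integral_max_one_sub_norm_sq_rpow {E : Type*} [NormedAddCommGroup E]
    [InnerProductSpace ℝ E] [FiniteDimensional ℝ E] [MeasurableSpace E] [BorelSpace E]
    [Nontrivial E] {q : ℝ} (hq : 0 < q) :
    ∫ x : E, max (1 - ‖x‖ ^ 2) 0 ^ q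
      = π ^ ((finrank ℝ E : ℝ) / 2) * Gamma (q + 1) / Gamma (q + 1 + finrank ℝ E / 2) := by
  rw [integral_fun_norm_addHaar volume (fun r => max (1 - r ^ 2) 0 ^ q), measureReal_def,
    InnerProductSpace.volume_ball, ENNReal.ofReal_one, one_pow, one_mul]
  have hn : 0 < finrank ℝ E := finrank_pos
  generalize finrank ℝ E = n at hn ⊢
  have hΓn : Gamma (n / 2 + 1) = n / 2 * Gamma (n / 2) := Gamma_add_one (by positivity)
  have hΓ : 0 < Gamma (n / 2) := Gamma_pos_of_pos (by positivity)
  have hsqrt : √π ^ n = π ^ ((n : ℝ) / 2) := by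
    rw [sqrt_eq_rpow, ← rpow_natCast, ← rpow_mul pi_pos.le, one_div_mul_eq_div]
  simp only [smul_eq_mul, nsmul_eq_mul]
  rw [ENNReal.toReal_ofReal (by positivity), hsqrt, integral_Ioi_pow_mul_max_one_sub_sq_rpow hn hq,
    hΓn, add_comm (q + 1)]
  field_simp

section ParabolicCutoff

variable {E : Type*} [NormedAddCommGroup E]

noncomputable def parabolicCutoff (R : ℝ) (x : E) : ℝ := max (1 - ‖x‖ ^ 2 / R ^ 2) 0

theorem parabolicCutoff_nonneg (R : ℝ) (x : E) : 0 ≤ parabolicCutoff R x :=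
  le_max_right _ _

theorem parabolicCutoff_le_one (R : ℝ) (x : E) : parabolicCutoff R x ≤ 1 :=
  max_le (sub_le_self _ (by positivity)) zero_le_one

theorem continuous_parabolicCutoff (R : ℝ) : Continuous (parabolicCutoff (E := E) R) := by
  unfold parabolicCutoff
  fun_prop

theorem hasCompactSupport_parabolicCutoff [ProperSpace E] {R : ℝ} (hR : R ≠ 0) :
    HasCompactSupport (parabolicCutoff (E := E) R) := by
  refine HasCompactSupport.intro (isCompact_closedBall 0 |R|) fun x hx => max_eq_right ?_
  rw [mem_closedBall_zero_iff, not_le] at hx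
  rw [sub_nonpos, one_le_div (by positivity)]
  exact (sq_lt_sq.2 (by rwa [abs_norm])).le

theorem one_le_parabolicCutoff_add {R : ℝ} (hR : 0 < R) (x : E) :
    1 ≤ parabolicCutoff R x + R ^ (-2 : ℝ) * ‖x‖ ^ 2 := by
  rw [rpow_neg hR.le, rpow_two, ← div_eq_inv_mul]
  have : 1 - ‖x‖ ^ 2 / R ^ 2 ≤ parabolicCutoff R x := le_max_left _ _
  linarith

theorem integral_le_integral_parabolicCutoff_mul_add [MeasurableSpace E] [OpensMeasurableSpace E]
    {μ : Measure E} {g : E → ℝ} (hg_nonneg : ∀ x, 0 ≤ g x) (hg : Integrable g μ)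
    (hg_var : Integrable (fun x => ‖x‖ ^ 2 * g x) μ) {R : ℝ} (hR : 0 < R) :
    ∫ x, g x ∂μ ≤ ∫ x, parabolicCutoff R x * g x ∂μ + R ^ (-2 : ℝ) * ∫ x, ‖x‖ ^ 2 * g x ∂μ := by
  have hwg : Integrable (fun x => parabolicCutoff R x * g x) μ :=
    hg.bdd_mul (continuous_parabolicCutoff R).aestronglyMeasurable <| .of_forall fun x => by
      rw [norm_of_nonneg (parabolicCutoff_nonneg R x)]
      exact parabolicCutoff_le_one R x
  rw [← integral_const_mul, ← integral_add hwg (hg_var.const_mul _)]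
  refine integral_mono hg (hwg.add (hg_var.const_mul _)) fun x => ?_
  have := mul_le_mul_of_nonneg_right (one_le_parabolicCutoff_add hR x) (hg_nonneg x)
  linarith

theorem integral_parabolicCutoff_mul_le [MeasurableSpace E] [OpensMeasurableSpace E]
    [ProperSpace E] {μ : Measure E} [IsFiniteMeasureOnCompacts μ] {g : E → ℝ}
    (hg_nonneg : ∀ x, 0 ≤ g x) (hg : AEStronglyMeasurable g μ) {p : ℝ} (hp : 1 < p)
    (hg_int : Integrable (fun x => g x ^ ((p + 1) / 2)) μ) {R : ℝ} (hR : R ≠ 0) :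
    ∫ x, parabolicCutoff R x * g x ∂μ
      ≤ (∫ x, parabolicCutoff R x ^ ((p + 1) / (p - 1)) ∂μ) ^ ((p - 1) / (p + 1))
        * (∫ x, g x ^ ((p + 1) / 2) ∂μ) ^ (2 / (p + 1)) := by
  have hp1 : 0 < p - 1 := by linarith
  have hpq : ((p + 1) / (p - 1)).HolderConjugate ((p + 1) / 2) :=
    Real.holderConjugate_iff.mpr ⟨by rw [one_lt_div hp1]; linarith, by field_simp; ring⟩
  have hg_mem : MemLp g (ENNReal.ofReal ((p + 1) / 2)) μ := by
    refine (integrable_norm_rpow_iff hg (ENNReal.ofReal_pos.2 (by linarith)).ne'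
      ENNReal.ofReal_ne_top).1 ?_
    simpa [ENNReal.toReal_ofReal (by linarith : 0 ≤ (p + 1) / 2), abs_of_nonneg (hg_nonneg _)]
      using hg_int
  simpa only [one_div_div] using integral_mul_le_Lp_mul_Lq_of_nonneg hpq
    (.of_forall (parabolicCutoff_nonneg R)) (.of_forall hg_nonneg)
    ((continuous_parabolicCutoff R).memLp_of_hasCompactSupport
      (hasCompactSupport_parabolicCutoff hR)) hg_mem

theorem integral_parabolicCutoff_rpow [InnerProductSpace ℝ E] [FiniteDimensional ℝ E]
    [MeasurableSpace E] [BorelSpace E] [Nontrivial E] {R q : ℝ} (hR : 0 < R) (hq : 0 < q) :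
    ∫ x : E, parabolicCutoff R x ^ q = R ^ finrank ℝ E
      * (π ^ ((finrank ℝ E : ℝ) / 2) * Gamma (q + 1) / Gamma (q + 1 + finrank ℝ E / 2)) := by
  rw [← integral_max_one_sub_norm_sq_rpow hq, ← smul_eq_mul,
    ← Measure.integral_comp_inv_smul_of_nonneg volume _ hR.le]
  congr with x
  rw [parabolicCutoff, norm_smul, mul_pow, norm_inv, norm_of_nonneg hR.le, inv_pow,
    ← div_eq_inv_mul]

end ParabolicCutoff

/-- Splitting estimate for the mass: for any `u ∈ L² ∩ L^{p+1}` with `xu ∈ L²`,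
any `R > 0`, `p > 1`, `N ≥ 1`:
`∫|u|² ≤ D_{p,N} R^{N(p−1)/(p+1)} ‖u‖_{L^{p+1}}² + R^{−2} ∫|x|²|u|²`, where
`D_{p,N} = (π^{N/2} Γ(2p/(p−1))/Γ(2p/(p−1)+N/2))^{(p−1)/(p+1)}`. -/
theorem mass_splitting (N : ℕ) (hN : 1 ≤ N) (p : ℝ) (hp : 1 < p)
    (u : EuclideanSpace ℝ (Fin N) → ℂ)
    (hu_L2 : Integrable (fun x => ‖u x‖ ^ 2))
    (hu_Lp1 : Integrable (fun x => ‖u x‖ ^ (p + 1)))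
    (hu_var : Integrable (fun x => ‖x‖ ^ 2 * ‖u x‖ ^ 2))
    (R : ℝ) (hR : 0 < R) :
    ∫ x, ‖u x‖ ^ 2
      ≤ (π ^ ((N : ℝ) / 2) * Real.Gamma (2 * p / (p - 1))
            / Real.Gamma (2 * p / (p - 1) + (N : ℝ) / 2)) ^ ((p - 1) / (p + 1))
          * R ^ ((N : ℝ) * (p - 1) / (p + 1))
          * ((∫ x, ‖u x‖ ^ (p + 1)) ^ (1 / (p + 1))) ^ (2 : ℝ)
        + R ^ (-2 : ℝ) * ∫ x, ‖x‖ ^ 2 * ‖u x‖ ^ 2 := by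
  have : Nonempty (Fin N) := ⟨⟨0, hN⟩⟩
  have hp1 : 0 < p - 1 := by linarith
  have hq1 : (p + 1) / (p - 1) + 1 = 2 * p / (p - 1) := by field_simp; ring
  have hsq_rpow : ∀ x, (‖u x‖ ^ 2) ^ ((p + 1) / 2) = ‖u x‖ ^ (p + 1) := fun x => by
    rw [← rpow_natCast_mul (norm_nonneg _)]
    ring_nf
  calc ∫ x, ‖u x‖ ^ 2
      ≤ (∫ x, parabolicCutoff R x * ‖u x‖ ^ 2) + R ^ (-2 : ℝ) * ∫ x, ‖x‖ ^ 2 * ‖u x‖ ^ 2 :=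
        integral_le_integral_parabolicCutoff_mul_add (fun x => by positivity) hu_L2 hu_var hR
    _ ≤ (∫ x, parabolicCutoff R x ^ ((p + 1) / (p - 1))) ^ ((p - 1) / (p + 1))
          * (∫ x, (‖u x‖ ^ 2) ^ ((p + 1) / 2)) ^ (2 / (p + 1))
          + R ^ (-2 : ℝ) * ∫ x, ‖x‖ ^ 2 * ‖u x‖ ^ 2 := by
        gcongr
        exact integral_parabolicCutoff_mul_le (fun x => by positivity) hu_L2.1 hp
          (by simpa only [hsq_rpow] using hu_Lp1) hR.ne'
    _ = _ := by
        simp only [hsq_rpow]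
        rw [integral_parabolicCutoff_rpow hR (by positivity), finrank_euclideanSpace_fin, hq1,
          mul_rpow (by positivity) (by positivity), ← rpow_natCast, ← rpow_mul hR.le,
          ← rpow_mul (integral_nonneg fun x => by positivity)]
        ring_nf
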